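/- arXiv:2502.03408 — 6 statements merged into one kernel-verified Lean document; each statement's English description precedes it below -/
import Mathlib

section
/- Let A be an abelian category in which Ext groups are defined (e.g. Mathlib's Ext groups for abelian categories, under a HasExt hypothesis). Then for every object y of A and every n ≥ 1, the contravariant functor Ext^n(−, y) is weakly effaceable: for every object x and every class α ∈ Ext^n(x, y) there exists an epimorphism p: x' ↠ x such that the pullback of α along p vanishes, i.e. Ext^n(p, y)(α) = 0. -/
/-!
Write `α` as a right fraction `g ∘ s⁻¹` in the derived category, with `s : K ⟶ x[0]` a
quasi-isomorphism of cochain complexes. The degree-`0` cycles of `K` surject onto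
`H⁰(K) ≅ x`, and the inclusion of these cycles, seen as a map from a complex concentrated in
degree `0`, lifts this epimorphism through `s`. Composed with `g`, it lands in `y[n]`, which is
concentrated in degree `-n < 0`, so it vanishes, and so does the pullback of `α`.
-/

open CategoryTheory CategoryTheory.Abelian

universe w v u

namespace HomologicalComplex

variable {C : Type u} [Category.{v} C] [Abelian C] {ι : Type*} {c : ComplexShape ι}

lemma exists_epi_single_map_eq_comp_of_quasiIsoAt {K : HomologicalComplex C c} {j : ι} {X : C}
    [DecidableEq ι] (π : K ⟶ (single C c j).obj X) [QuasiIsoAt π j] :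
    ∃ (X' : C) (p : X' ⟶ X) (σ : (single C c j).obj X' ⟶ K),
      Epi p ∧ (single C c j).map p = σ ≫ π := by
  refine ⟨K.cycles j, K.homologyπ j ≫ homologyMap π j ≫ (singleObjHomologySelfIso c j X).hom,
    mkHomFromSingle (K.iCycles j) (fun k _ ↦ K.iCycles_d j k), epi_comp _ _, ?_⟩
  apply from_single_hom_ext
  simp only [single_map_f_self, comp_f, mkHomFromSingle_f, Category.assoc]
  rw [cancel_epi, ← cancel_mono (singleObjXSelf c j X).hom]
  simp only [Category.assoc, Iso.inv_hom_id, Category.comp_id]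
  rw [homologyπ_naturality_assoc, homologyπ_singleObjHomologySelfIso_hom,
    singleObjCyclesSelfIso_hom, cyclesMap_i_assoc]

end HomologicalComplex

namespace DerivedCategory

variable {C : Type u} [Category.{v} C] [Abelian C] [HasDerivedCategory.{w} C]

lemma exists_epi_single_map_comp_eq_zero {X : C} {L : CochainComplex C ℤ} {i : ℤ}
    (φ : Q.obj ((HomologicalComplex.single C (ComplexShape.up ℤ) i).obj X) ⟶ Q.obj L)
    (n : ℤ) (hn : n < i) [L.IsStrictlyLE n] :
    ∃ (X' : C) (p : X' ⟶ X), Epi p ∧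
      Q.map ((HomologicalComplex.single C (ComplexShape.up ℤ) i).map p) ≫ φ = 0 := by
  obtain ⟨K, s, hs, g, rfl⟩ := right_fac φ
  have : QuasiIso s := (isIso_Q_map_iff_quasiIso C s).1 hs
  obtain ⟨X', p, σ, hp, hσ⟩ := HomologicalComplex.exists_epi_single_map_eq_comp_of_quasiIsoAt s
  have hσg : σ ≫ g = 0 := by
    apply HomologicalComplex.from_single_hom_ext
    apply (L.isZero_of_isStrictlyLE n i hn).eq_of_tgt
  refine ⟨X', p, hp, ?_⟩
  rw [hσ, Q.map_comp, Category.assoc, IsIso.hom_inv_id_assoc, ← Q.map_comp, hσg, Q.map_zero]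

end DerivedCategory

/-- For every object `y`, every `n ≥ 1`, every object `x` and every class
`α ∈ Ext^n(x, y)`, there exists an epimorphism `p : x' ↠ x` such that the pullback of
`α` along `p` (i.e. the composition `(mk₀ p).comp α`) vanishes. -/
theorem ext_weakly_effaceable {A : Type u} [Category.{v} A] [Abelian A] [HasExt.{w} A]
    (y : A) (n : ℕ) (hn : 1 ≤ n) (x : A) (α : Ext x y n) :
    ∃ (x' : A) (p : x' ⟶ x), Epi p ∧ (Ext.mk₀ p).comp α (zero_add n) = 0 := by
  let := HasDerivedCategory.standard A
  let e := (DerivedCategory.singleFunctors A).shiftIso n (-n) 0 (by lia)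
  obtain ⟨x', p, hp, hpα⟩ :=
    DerivedCategory.exists_epi_single_map_comp_eq_zero (α.hom ≫ e.hom.app y)
      (L := (CochainComplex.singleFunctor A (-n)).obj y) (-n) (by lia)
  refine ⟨x', p, hp, Ext.ext ?_⟩
  rw [Ext.comp_hom, Ext.mk₀_hom, ShiftedHom.mk₀_comp, Ext.zero_hom, ← cancel_mono (e.hom.app y),
    Category.assoc, Limits.zero_comp]
  exact hpα
end

section
/- Let B be an exact category and let A ⊆ B be a full subcategory closed under extensions which is resolving, i.e.: (i) for every exact sequence x ↣ y ↠ z of B with y ∈ A one also has x ∈ A; and (ii) every object z of B admits a projection y ↠ z with y ∈ A. Then A is left special in B: for every projection p: x ↠ v of B with v ∈ A there exists a morphism f: u → x with u ∈ A such that the composite p ∘ f is a projection of B whose kernel lies in A. -/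
/-!
Basic definitions: exact (∞-)categories à la Barwick (1-categorical formalization).
An exact structure on an additive category consists of two wide subcategories of
"inclusions" and "projections" subject to the axioms below.
-/

open CategoryTheory CategoryTheory.Limits

universe w v u v₂ u₂

namespace ExactPaper

variable {E : Type u} [Category.{v} E]

/-- `ι` is a kernel of `f`. -/
def IsKernelι [Preadditive E] {k x y : E} (ι : k ⟶ x) (f : x ⟶ y) : Prop :=
  ∃ w : ι ≫ f = 0, Nonempty (IsLimit (KernelFork.ofι ι w))

/-- `π` is a cokernel of `f`. -/
def IsCokernelπ [Preadditive E] {x y c : E} (f : x ⟶ y) (π : y ⟶ c) : Prop :=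
  ∃ w : f ≫ π = 0, Nonempty (IsColimit (CokernelCofork.ofπ π w))

/-- An exact structure on an additive category `E`: two wide subcategories of
inclusions (`↣`) and projections (`↠`) satisfying Barwick's axioms.  In the axiom
`exact_square`, the square has top edge `i : x ⟶ y`, left edge `p : x ⟶ x'`,
right edge `q : y ⟶ y'` and bottom edge `j : x' ⟶ y'`. -/
structure ExactStructure (E : Type u) [Category.{v} E] [Preadditive E] where
  /-- the class of inclusions -/
  IsIncl : ∀ ⦃x y : E⦄, (x ⟶ y) → Prop
  /-- the class of projections -/
  IsProj : ∀ ⦃x y : E⦄, (x ⟶ y) → Prop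
  incl_id : ∀ x : E, IsIncl (𝟙 x)
  incl_comp : ∀ {x y z : E} (f : x ⟶ y) (g : y ⟶ z), IsIncl f → IsIncl g → IsIncl (f ≫ g)
  proj_id : ∀ x : E, IsProj (𝟙 x)
  proj_comp : ∀ {x y z : E} (f : x ⟶ y) (g : y ⟶ z), IsProj f → IsProj g → IsProj (f ≫ g)
  incl_from_zero : ∀ {z x : E}, IsZero z → ∀ f : z ⟶ x, IsIncl f
  proj_to_zero : ∀ {x z : E}, IsZero z → ∀ f : x ⟶ z, IsProj f
  /-- pushouts of inclusions along arbitrary morphisms exist -/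
  pushout_incl : ∀ {x y x' : E} (i : x ⟶ y) (f : x ⟶ x'), IsIncl i →
    ∃ (y' : E) (g : y ⟶ y') (j : x' ⟶ y'), IsPushout i f g j
  /-- inclusions are stable under pushout -/
  incl_pushout_stable : ∀ {x y x' y' : E} {i : x ⟶ y} {f : x ⟶ x'} {g : y ⟶ y'} {j : x' ⟶ y'},
    IsPushout i f g j → IsIncl i → IsIncl j
  /-- pullbacks of projections along arbitrary morphisms exist -/
  pullback_proj : ∀ {y z z' : E} (p : y ⟶ z) (f : z' ⟶ z), IsProj p →
    ∃ (y' : E) (g : y' ⟶ y) (q : y' ⟶ z'), IsPullback g q p f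
  /-- projections are stable under pullback -/
  proj_pullback_stable : ∀ {y' z' y z : E} {g : y' ⟶ y} {q : y' ⟶ z'} {p : y ⟶ z} {f : z' ⟶ z},
    IsPullback g q p f → IsProj p → IsProj q
  /-- compatibility: the pushout and pullback descriptions of exact squares agree -/
  exact_square : ∀ {x y x' y' : E} (i : x ⟶ y) (p : x ⟶ x') (q : y ⟶ y') (j : x' ⟶ y'),
    i ≫ q = p ≫ j →
    ((IsIncl i ∧ IsProj p ∧ IsPushout i p q j) ↔ (IsIncl j ∧ IsProj q ∧ IsPullback i p q j))

/-- An exact sequence `x ↣ y ↠ z`: an inclusion which is a kernel of a projection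
which is in turn a cokernel of the inclusion. -/
def IsExactSeq [Preadditive E] (S : ExactStructure E) {x y z : E} (i : x ⟶ y) (p : y ⟶ z) :
    Prop :=
  S.IsIncl i ∧ S.IsProj p ∧ IsKernelι i p ∧ IsCokernelπ i p

end ExactPaper

namespace ExactPaper

/-- Let `B` be an exact category and let `A ⊆ B` be a full subcategory
closed under extensions which is resolving: (i) for every exact sequence `x ↣ y ↠ z`
with `y ∈ A` one has `x ∈ A`, and (ii) every object admits a projection from an object
of `A`.  Then `A` is left special in `B`: for every projection `p : x ↠ v` with `v ∈ A`
there is a morphism `f : u ⟶ x` with `u ∈ A` such that `f ≫ p` is a projection whose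
kernel lies in `A`. -/
theorem resolving_is_left_special {B : Type u} [Category.{v} B] [Preadditive B]
    (S : ExactStructure B) (A : B → Prop)
    (hzero : ∃ z : B, IsZero z ∧ A z)
    (hext : ∀ {u y w : B} (i : u ⟶ y) (π : y ⟶ w), IsExactSeq S i π → A u → A w → A y)
    (hres₁ : ∀ {x y z : B} (i : x ⟶ y) (π : y ⟶ z), IsExactSeq S i π → A y → A x)
    (hres₂ : ∀ z : B, ∃ (y : B) (π : y ⟶ z), A y ∧ S.IsProj π) :
    ∀ {x v : B} (p : x ⟶ v), S.IsProj p → A v →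
      ∃ (u : B) (f : u ⟶ x), A u ∧ S.IsProj (f ≫ p) ∧
        ∃ (k : B) (κ : k ⟶ u), A k ∧ IsKernelι κ (f ≫ p) := by
  intro x v p hp hAv
  obtain ⟨z0, hz0, _⟩ := hzero
  obtain ⟨u, f, hAu, hf⟩ := hres₂ x
  have hq : S.IsProj (f ≫ p) := S.proj_comp f p hf hp
  set q := f ≫ p with hqdef
  obtain ⟨k, κ, t, hpb⟩ := S.pullback_proj q (0 : z0 ⟶ v) hq
  have ht0 : t = 0 := hz0.eq_of_tgt t 0
  have w : κ ≫ q = 0 := by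
    rw [hpb.w, ht0, zero_comp]
  -- kernel fork is a limit
  have hker : IsKernelι κ q := by
    refine ⟨w, ⟨KernelFork.IsLimit.ofι κ w
      (fun {W} g hg => hpb.lift g 0 (by simp [hg]))
      (fun {W} g hg => hpb.lift_fst g 0 _)
      (fun {W} g hg m hm => ?_)⟩⟩
    apply hpb.hom_ext
    · rw [hm, hpb.lift_fst]
    · rw [hpb.lift_snd, ht0, comp_zero]
  -- from the exact square axiom, κ is an inclusion and the square is a pushout
  have hsq := (S.exact_square κ t q (0 : z0 ⟶ v) hpb.w).mpr
    ⟨S.incl_from_zero hz0 _, hq, hpb⟩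
  obtain ⟨hκincl, -, hpo⟩ := hsq
  -- q is the cokernel of κ
  have hcoker : IsCokernelπ κ q := by
    refine ⟨w, ⟨CokernelCofork.IsColimit.ofπ q w
      (fun {W} g hg => hpo.desc g 0 (by rw [hg, ht0, zero_comp]))
      (fun {W} g hg => hpo.inl_desc g 0 _)
      (fun {W} g hg m hm => ?_)⟩⟩
    apply hpo.hom_ext
    · rw [hm, hpo.inl_desc]
    · exact hz0.eq_of_src _ _
  have hAk : A k := hres₁ κ q ⟨hκincl, hq, hker, hcoker⟩ hAu
  exact ⟨u, f, hAu, hq, k, κ, hAk, hker⟩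

end ExactPaper
end

section
/- Let E be an exact category and let A and B be full subcategories closed under extensions. Assume: (a) every morphism from an object of A to an object of B is zero; and (b) every object x of E fits into an exact sequence a ↣ x ↠ b with a ∈ A and b ∈ B. Then the inclusion functor A → E admits a right adjoint p such that for each x the counit p(x) → x is the inclusion of such an exact sequence, and the inclusion functor B → E admits a left adjoint q such that for each x the unit x → q(x) is the projection of such an exact sequence; in particular there is a natural exact sequence p(x) ↣ x ↠ q(x). -/
/-!
Basic definitions: exact (∞-)categories à la Barwick (1-categorical formalization).
An exact structure on an additive category consists of two wide subcategories of
"inclusions" and "projections" subject to the axioms below.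
-/

open CategoryTheory CategoryTheory.Limits

universe w v u v₂ u₂

/-!
Orthogonality makes the sequence `a ↣ x ↠ b` universal on both sides: every map from an object
of `A` to `x` is killed by `x ↠ b`, so it factors uniquely through the kernel `a ↣ x`, and dually
every map from `x` to an object of `B` factors uniquely through the cokernel `x ↠ b`. These
universal arrows assemble into a right adjoint of `A ⊆ E` with counit `a ↣ x` and a left adjoint
of `B ⊆ E` with unit `x ↠ b`.
-/

namespace ExactPaper

section Coreflection

variable {C : Type*} [Category C] (P : ObjectProperty C) (r : C → P.FullSubcategory)
  (ε : ∀ x, (r x).obj ⟶ x)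
  (hε : ∀ (X : P.FullSubcategory) (x : C), Function.Bijective fun l : X.obj ⟶ (r x).obj => l ≫ ε x)

noncomputable def coreflectionHomEquiv (X : P.FullSubcategory) (x : C) :
    (P.ι.obj X ⟶ x) ≃ (X ⟶ r x) :=
  (Equiv.ofBijective _ (hε X x)).symm.trans P.fullyFaithfulι.homEquiv.symm

lemma coreflectionHomEquiv_symm_apply (X : P.FullSubcategory) (x : C) (l : X ⟶ r x) :
    (coreflectionHomEquiv P r ε hε X x).symm l = l.hom ≫ ε x :=
  rfl

lemma coreflectionHomEquiv_hom_comp (X : P.FullSubcategory) (x : C) (f : P.ι.obj X ⟶ x) :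
    (coreflectionHomEquiv P r ε hε X x f).hom ≫ ε x = f :=
  (coreflectionHomEquiv P r ε hε X x).symm_apply_apply f

lemma coreflectionHomEquiv_naturality (X' X : P.FullSubcategory) (x : C) (f : X' ⟶ X)
    (g : P.ι.obj X ⟶ x) :
    coreflectionHomEquiv P r ε hε X' x (P.ι.map f ≫ g) =
      f ≫ coreflectionHomEquiv P r ε hε X x g := by
  rw [← Equiv.eq_symm_apply, coreflectionHomEquiv_symm_apply]
  simp only [ObjectProperty.ι_map, ObjectProperty.FullSubcategory.comp_hom, Category.assoc]
  rw [coreflectionHomEquiv_hom_comp]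

noncomputable def coreflector : C ⥤ P.FullSubcategory :=
  Adjunction.rightAdjointOfEquiv _ (coreflectionHomEquiv_naturality P r ε hε)

noncomputable def coreflectorAdjunction : P.ι ⊣ coreflector P r ε hε :=
  Adjunction.adjunctionOfEquivRight _ (coreflectionHomEquiv_naturality P r ε hε)

lemma coreflectorAdjunction_counit_app (x : C) :
    (coreflectorAdjunction P r ε hε).counit.app x = ε x := by
  simp only [coreflectorAdjunction, Adjunction.adjunctionOfEquivRight_counit_app,
    coreflectionHomEquiv_symm_apply]
  exact Category.id_comp _

end Coreflection

section Reflection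

variable {C : Type*} [Category C] (P : ObjectProperty C) (s : C → P.FullSubcategory)
  (η : ∀ x, x ⟶ (s x).obj)
  (hη : ∀ (x : C) (Y : P.FullSubcategory), Function.Bijective fun l : (s x).obj ⟶ Y.obj => η x ≫ l)

noncomputable def reflectionHomEquiv (x : C) (Y : P.FullSubcategory) :
    (s x ⟶ Y) ≃ (x ⟶ P.ι.obj Y) :=
  P.fullyFaithfulι.homEquiv.trans (Equiv.ofBijective _ (hη x Y))

lemma reflectionHomEquiv_apply (x : C) (Y : P.FullSubcategory) (l : s x ⟶ Y) :
    reflectionHomEquiv P s η hη x Y l = η x ≫ l.hom :=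
  rfl

lemma reflectionHomEquiv_naturality (x : C) (Y Y' : P.FullSubcategory) (g : Y ⟶ Y')
    (h : s x ⟶ Y) :
    reflectionHomEquiv P s η hη x Y' (h ≫ g) = reflectionHomEquiv P s η hη x Y h ≫ P.ι.map g :=
  (Category.assoc _ _ _).symm

noncomputable def reflector : C ⥤ P.FullSubcategory :=
  Adjunction.leftAdjointOfEquiv _ (reflectionHomEquiv_naturality P s η hη)

noncomputable def reflectorAdjunction : reflector P s η hη ⊣ P.ι :=
  Adjunction.adjunctionOfEquivLeft _ (reflectionHomEquiv_naturality P s η hη)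

lemma reflectorAdjunction_unit_app (x : C) :
    (reflectorAdjunction P s η hη).unit.app x = η x := by
  simp only [reflectorAdjunction, Adjunction.adjunctionOfEquivLeft_unit_app,
    reflectionHomEquiv_apply]
  exact Category.comp_id _

end Reflection

section KernelsCokernels

variable {E : Type*} [Category E] [Preadditive E]

lemma IsKernelι.bijective_comp {k x y c : E} {ι : k ⟶ x} {f : x ⟶ y} (h : IsKernelι ι f)
    (hc : ∀ g : c ⟶ x, g ≫ f = 0) : Function.Bijective fun l : c ⟶ k => l ≫ ι := by
  obtain ⟨_, ⟨hι⟩⟩ := h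
  exact ⟨fun _ _ => Fork.IsLimit.hom_ext hι,
    fun g => ⟨_, (KernelFork.IsLimit.lift' hι g (hc g)).2⟩⟩

lemma IsCokernelπ.bijective_comp {x y c d : E} {f : x ⟶ y} {π : y ⟶ c} (h : IsCokernelπ f π)
    (hd : ∀ g : y ⟶ d, f ≫ g = 0) : Function.Bijective fun l : c ⟶ d => π ≫ l := by
  obtain ⟨_, ⟨hπ⟩⟩ := h
  exact ⟨fun _ _ => Cofork.IsColimit.hom_ext hπ,
    fun g => ⟨_, (CokernelCofork.IsColimit.desc' hπ g (hd g)).2⟩⟩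

end KernelsCokernels

theorem sod_adjoints_general {E : Type u} [Category.{v} E] [Preadditive E]
    (S : ExactStructure E) (A B : E → Prop)
    (horth : ∀ {a b : E}, A a → B b → ∀ f : a ⟶ b, f = 0)
    (hdec : ∀ x : E, ∃ (a : E) (i : a ⟶ x) (b : E) (π : x ⟶ b),
      A a ∧ B b ∧ IsExactSeq S i π) :
    ∃ (p : E ⥤ ObjectProperty.FullSubcategory A) (adjA : ObjectProperty.ι A ⊣ p)
      (q : E ⥤ ObjectProperty.FullSubcategory B) (adjB : q ⊣ ObjectProperty.ι B),
      ∀ x : E, IsExactSeq S (adjA.counit.app x) (adjB.unit.app x) := by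
  choose a i b π hAa hBb hex using hdec
  have hi : ∀ (X : ObjectProperty.FullSubcategory A) (x : E),
      Function.Bijective fun l : X.obj ⟶ a x => l ≫ i x :=
    fun X x => (hex x).2.2.1.bijective_comp fun _ => horth X.property (hBb x) _
  have hπ : ∀ (x : E) (Y : ObjectProperty.FullSubcategory B),
      Function.Bijective fun l : b x ⟶ Y.obj => π x ≫ l :=
    fun x Y => (hex x).2.2.2.bijective_comp fun _ => horth (hAa x) Y.property _
  refine ⟨_, coreflectorAdjunction A (fun x => ⟨a x, hAa x⟩) i hi,
    _, reflectorAdjunction B (fun x => ⟨b x, hBb x⟩) π hπ, fun x => ?_⟩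
  rw [coreflectorAdjunction_counit_app, reflectorAdjunction_unit_app]
  exact hex x

/-- Let `E` be an exact category and let `A`, `B` be full subcategories
closed under extensions such that (a) every morphism from an object of `A` to an object
of `B` is zero, and (b) every object `x` fits into an exact sequence `a ↣ x ↠ b` with
`a ∈ A`, `b ∈ B`.  Then the inclusion of `A` admits a right adjoint `p` with counit
`p(x) ⟶ x` an inclusion, the inclusion of `B` admits a left adjoint `q` with unit
`x ⟶ q(x)` a projection, and `p(x) ↣ x ↠ q(x)` is a (natural) exact sequence. -/
theorem sod_adjoints {E : Type u} [Category.{v} E] [Preadditive E]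
    (S : ExactStructure E) (A B : E → Prop)
    (hA₀ : ∃ z : E, IsZero z ∧ A z)
    (hAext : ∀ {u y w : E} (i : u ⟶ y) (π : y ⟶ w), IsExactSeq S i π → A u → A w → A y)
    (hB₀ : ∃ z : E, IsZero z ∧ B z)
    (hBext : ∀ {u y w : E} (i : u ⟶ y) (π : y ⟶ w), IsExactSeq S i π → B u → B w → B y)
    (horth : ∀ {a b : E}, A a → B b → ∀ f : a ⟶ b, f = 0)
    (hdec : ∀ x : E, ∃ (a : E) (i : a ⟶ x) (b : E) (π : x ⟶ b),
      A a ∧ B b ∧ IsExactSeq S i π) :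
    ∃ (p : E ⥤ ObjectProperty.FullSubcategory A) (adjA : ObjectProperty.ι A ⊣ p)
      (q : E ⥤ ObjectProperty.FullSubcategory B) (adjB : q ⊣ ObjectProperty.ι B),
      ∀ x : E, IsExactSeq S (adjA.counit.app x) (adjB.unit.app x) :=
  sod_adjoints_general S A B horth hdec

end ExactPaper
end

section
/- Let E be an exact category and let A be a full subcategory closed under extensions whose inclusion functor i: A → E admits an exact right adjoint p such that for each object x the counit i p(x) → x is an inclusion. Let B be the full subcategory of objects x with p(x) ≅ 0. Then the assignment q(x) := coker(i p(x) → x) defines an exact left adjoint q to the inclusion j: B → E, the unit x → j q(x) is a projection for every x, and A coincides with the full subcategory of objects x with q(x) ≅ 0. -/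
/-!
Basic definitions: exact (∞-)categories à la Barwick (1-categorical formalization).
An exact structure on an additive category consists of two wide subcategories of
"inclusions" and "projections" subject to the axioms below.
-/

open CategoryTheory CategoryTheory.Limits

universe w v u v₂ u₂

namespace ExactPaper

/-- The kernel of `p : E ⥤ A`: objects `x` with `p(x) ≅ 0`. -/
def pKernel {E : Type u} [Category.{v} E] {A : E → Prop}
    (p : E ⥤ ObjectProperty.FullSubcategory A) : E → Prop :=
  fun x => IsZero ((ObjectProperty.ι A).obj (p.obj x))

/-!
A map from `x` to an object `y` with `p y ≅ 0` kills the counit `ε x : i p x ↣ x` (by naturality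
of `ε`), so it factors uniquely through `q x := coker (ε x)`; and `p` kills `q x`, because `p` is
exact and inverts `ε x`. Exactness of `q` is the `3 × 3` lemma for the morphism `ε` from
`i p x ↣ i p y ↠ i p z` to `x ↣ y ↠ z`. Finally `q x ≅ 0` exactly when `ε x` is an isomorphism, and
`A` is closed under isomorphisms since it is closed under extensions and contains `0`.
-/

section Category

variable {E : Type u} [Category.{v} E]

theorem IsPushout.of_exists_desc {x y x' y' : E} {i : x ⟶ y} {f : x ⟶ x'} {g : y ⟶ y'}
    {j : x' ⟶ y'} (w : i ≫ g = f ≫ j)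
    (hext : ∀ {T : E} {a b : y' ⟶ T}, g ≫ a = g ≫ b → j ≫ a = j ≫ b → a = b)
    (H : ∀ {T : E} (a : y ⟶ T) (b : x' ⟶ T), i ≫ a = f ≫ b →
      ∃ d : y' ⟶ T, g ≫ d = a ∧ j ≫ d = b) :
    IsPushout i f g j :=
  IsPushout.of_isColimit' ⟨w⟩ (PushoutCocone.IsColimit.mk w
    (fun s => (H s.inl s.inr s.condition).choose)
    (fun s => (H s.inl s.inr s.condition).choose_spec.1)
    (fun s => (H s.inl s.inr s.condition).choose_spec.2)
    (fun s m h₁ h₂ => hext (by rw [h₁, (H s.inl s.inr s.condition).choose_spec.1])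
      (by rw [h₂, (H s.inl s.inr s.condition).choose_spec.2])))

theorem IsPullback.of_exists_lift {w x y z : E} {g : w ⟶ x} {f : w ⟶ y} {s : x ⟶ z}
    {j : y ⟶ z} (sq : g ≫ s = f ≫ j)
    (hext : ∀ {T : E} {a b : T ⟶ w}, a ≫ g = b ≫ g → a ≫ f = b ≫ f → a = b)
    (H : ∀ {T : E} (a : T ⟶ x) (b : T ⟶ y), a ≫ s = b ≫ j →
      ∃ l : T ⟶ w, l ≫ g = a ∧ l ≫ f = b) :
    IsPullback g f s j :=
  IsPullback.of_isLimit' ⟨sq⟩ (PullbackCone.IsLimit.mk sq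
    (fun c => (H c.fst c.snd c.condition).choose)
    (fun c => (H c.fst c.snd c.condition).choose_spec.1)
    (fun c => (H c.fst c.snd c.condition).choose_spec.2)
    (fun c m h₁ h₂ => hext (by rw [h₁, (H c.fst c.snd c.condition).choose_spec.1])
      (by rw [h₂, (H c.fst c.snd c.condition).choose_spec.2])))

end Category

section Preadditive

variable {E : Type u} [Category.{v} E] [Preadditive E]

theorem IsCokernelπ.w {x y c : E} {f : x ⟶ y} {π : y ⟶ c} (h : IsCokernelπ f π) : f ≫ π = 0 :=
  h.1

theorem IsCokernelπ.epi {x y c : E} {f : x ⟶ y} {π : y ⟶ c} (h : IsCokernelπ f π) : Epi π :=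
  let ⟨_, ⟨hc⟩⟩ := h
  epi_of_isColimit_cofork hc

theorem IsCokernelπ.exists_desc {x y c : E} {f : x ⟶ y} {π : y ⟶ c} (h : IsCokernelπ f π)
    {T : E} (g : y ⟶ T) (hg : f ≫ g = 0) : ∃ d : c ⟶ T, π ≫ d = g :=
  let ⟨_, ⟨hc⟩⟩ := h
  ⟨_, (CokernelCofork.IsColimit.desc' hc g hg).2⟩

theorem IsCokernelπ.existsUnique_desc {x y c : E} {f : x ⟶ y} {π : y ⟶ c}
    (h : IsCokernelπ f π) {T : E} (g : y ⟶ T) (hg : f ≫ g = 0) : ∃! d : c ⟶ T, π ≫ d = g :=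
  have := h.epi
  (h.exists_desc g hg).elim fun d hd => ⟨d, hd, fun _ hd' => (cancel_epi π).1 (hd'.trans hd.symm)⟩

theorem IsCokernelπ.of_exists_desc {x y c : E} {f : x ⟶ y} {π : y ⟶ c} (w : f ≫ π = 0)
    [Epi π] (H : ∀ {T : E} (g : y ⟶ T), f ≫ g = 0 → ∃ d : c ⟶ T, π ≫ d = g) :
    IsCokernelπ f π :=
  ⟨w, ⟨CokernelCofork.IsColimit.ofπ' π w fun g hg => ⟨_, (H g hg).choose_spec⟩⟩⟩

theorem IsCokernelπ.isZero_of_epi {x y c : E} {f : x ⟶ y} {π : y ⟶ c} (h : IsCokernelπ f π)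
    [Epi f] : IsZero c :=
  let ⟨_, ⟨hc⟩⟩ := h
  CokernelCofork.IsColimit.isZero_of_epi hc

theorem isCokernelπ_zero_of_epi {x y z : E} (hz : IsZero z) (f : x ⟶ y) [Epi f] :
    IsCokernelπ f (0 : y ⟶ z) :=
  ⟨comp_zero, ⟨CokernelCofork.IsColimit.ofEpiOfIsZero _ inferInstance hz⟩⟩

theorem IsKernelι.w {k x y : E} {ι : k ⟶ x} {f : x ⟶ y} (h : IsKernelι ι f) : ι ≫ f = 0 :=
  h.1

theorem IsKernelι.mono {k x y : E} {ι : k ⟶ x} {f : x ⟶ y} (h : IsKernelι ι f) : Mono ι :=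
  let ⟨_, ⟨hl⟩⟩ := h
  mono_of_isLimit_fork hl

theorem IsKernelι.exists_lift {k x y : E} {ι : k ⟶ x} {f : x ⟶ y} (h : IsKernelι ι f)
    {T : E} (g : T ⟶ x) (hg : g ≫ f = 0) : ∃ l : T ⟶ k, l ≫ ι = g :=
  let ⟨_, ⟨hl⟩⟩ := h
  ⟨_, (KernelFork.IsLimit.lift' hl g hg).2⟩

theorem IsKernelι.of_exists_lift {k x y : E} {ι : k ⟶ x} {f : x ⟶ y} (w : ι ≫ f = 0)
    [Mono ι] (H : ∀ {T : E} (g : T ⟶ x), g ≫ f = 0 → ∃ l : T ⟶ k, l ≫ ι = g) :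
    IsKernelι ι f :=
  ⟨w, ⟨KernelFork.IsLimit.ofι' ι w fun g hg => ⟨_, (H g hg).choose_spec⟩⟩⟩

theorem IsKernelι.isIso_of_eq_zero {k x y : E} {ι : k ⟶ x} {f : x ⟶ y} (h : IsKernelι ι f)
    (hf : f = 0) : IsIso ι :=
  let ⟨_, ⟨hl⟩⟩ := h
  KernelFork.IsLimit.isIso_ι _ hl hf

theorem IsCokernelπ.of_isPushout {x y x' y' c : E} {i : x ⟶ y} {f : x ⟶ x'} {g : y ⟶ y'}
    {j : x' ⟶ y'} {π : y ⟶ c} {γ : y' ⟶ c} (hπ : IsCokernelπ i π) (h : IsPushout i f g j)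
    (hg : g ≫ γ = π) (hj : j ≫ γ = 0) : IsCokernelπ j γ := by
  have := hπ.epi
  have := epi_of_epi_fac hg
  refine IsCokernelπ.of_exists_desc hj fun u hu => ?_
  obtain ⟨d, hd⟩ := hπ.exists_desc (g ≫ u) (by rw [← Category.assoc, h.w, Category.assoc, hu,
    comp_zero])
  refine ⟨d, h.hom_ext ?_ ?_⟩
  · rw [reassoc_of% hg, hd]
  · rw [reassoc_of% hj, zero_comp, hu]

theorem IsCokernelπ.comp_of_isPushout {a x y x' y' : E} {e : a ⟶ x} {i : x ⟶ y} {f : x ⟶ x'}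
    {g : y ⟶ y'} {j : x' ⟶ y'} (hf : IsCokernelπ e f) (h : IsPushout i f g j) :
    IsCokernelπ (e ≫ i) g := by
  have := hf.epi
  have : Epi g := ⟨fun a b hab => h.hom_ext hab <| (cancel_epi f).1 <| by
    rw [← reassoc_of% h.w, ← reassoc_of% h.w, hab]⟩
  refine IsCokernelπ.of_exists_desc (by rw [Category.assoc, h.w, reassoc_of% hf.w, zero_comp])
    fun u hu => ?_
  obtain ⟨v, hv⟩ := hf.exists_desc (i ≫ u) (by rw [← Category.assoc, hu])
  exact ⟨h.desc u v hv.symm, h.inl_desc u v hv.symm⟩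

theorem IsPushout.of_isCokernelπ_comp {a b c q w : E} {f : a ⟶ b} {g : b ⟶ c} {π : b ⟶ q}
    {r : c ⟶ w} {t : q ⟶ w} (hπ : IsCokernelπ f π) (hr : IsCokernelπ (f ≫ g) r)
    (sq : g ≫ r = π ≫ t) : IsPushout g π r t := by
  have := hπ.epi
  have := hr.epi
  refine IsPushout.of_exists_desc sq (fun hab _ => (cancel_epi r).1 hab) fun u v huv => ?_
  obtain ⟨d, hd⟩ := hr.exists_desc u (by rw [Category.assoc, huv, reassoc_of% hπ.w, zero_comp])
  refine ⟨d, hd, (cancel_epi π).1 ?_⟩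
  rw [← reassoc_of% sq, hd, huv]

theorem IsCokernelπ.of_columns {y' z' x y z x'' y'' z'' : E} {π' : y' ⟶ z'} {i : x ⟶ y}
    {π : y ⟶ z} {εy : y' ⟶ y} {εz : z' ⟶ z} {ηx : x ⟶ x''} {ηy : y ⟶ y''} {ηz : z ⟶ z''}
    {i'' : x'' ⟶ y''} {π'' : y'' ⟶ z''} [Epi π'] [Epi ηx] (hπ : IsCokernelπ i π)
    (hy : IsCokernelπ εy ηy) (hz : IsCokernelπ εz ηz) (sq₂ : π' ≫ εz = εy ≫ π)
    (sq₃ : ηx ≫ i'' = i ≫ ηy) (sq₄ : ηy ≫ π'' = π ≫ ηz) : IsCokernelπ i'' π'' := by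
  have := hπ.epi
  have := hy.epi
  have := hz.epi
  have := epi_of_epi_fac sq₄
  refine IsCokernelπ.of_exists_desc ((cancel_epi ηx).1 ?_) fun u hu => ?_
  · rw [reassoc_of% sq₃, sq₄, reassoc_of% hπ.w, zero_comp, comp_zero]
  obtain ⟨u₁, hu₁⟩ := hπ.exists_desc (ηy ≫ u) (by rw [← reassoc_of% sq₃, hu, comp_zero])
  obtain ⟨u₂, hu₂⟩ := hz.exists_desc u₁ <| (cancel_epi π').1 <| by
    rw [reassoc_of% sq₂, hu₁, reassoc_of% hy.w, zero_comp, comp_zero]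
  exact ⟨u₂, (cancel_epi ηy).1 (by rw [reassoc_of% sq₄, hu₂, hu₁])⟩

end Preadditive

section IsExactSeq

variable {E : Type u} [Category.{v} E] [Preadditive E] {S : ExactStructure E} {x y z : E}
  {i : x ⟶ y} {π : y ⟶ z}

theorem IsExactSeq.isIncl (h : IsExactSeq S i π) : S.IsIncl i := h.1

theorem IsExactSeq.isProj (h : IsExactSeq S i π) : S.IsProj π := h.2.1

theorem IsExactSeq.isKernelι (h : IsExactSeq S i π) : IsKernelι i π := h.2.2.1

theorem IsExactSeq.isCokernelπ (h : IsExactSeq S i π) : IsCokernelπ i π := h.2.2.2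

end IsExactSeq

namespace ExactStructure

variable {E : Type u} [Category.{v} E] [Preadditive E] (S : ExactStructure E)

theorem isIncl_of_isIso {x y : E} (f : x ⟶ y) [IsIso f] : S.IsIncl f :=
  S.incl_pushout_stable (IsPushout.of_horiz_isIso ⟨rfl⟩ : IsPushout (𝟙 x) (𝟙 x) f f)
    (S.incl_id x)

/-- A cokernel of `i` is a pushout of `i` along `x ⟶ 0`; the axiom `exact_square` turns this into a
pullback, which says that `i` is a kernel of `π`. -/
theorem isExactSeq_of_isCokernelπ {o : E} (ho : IsZero o) {x y c : E} {i : x ⟶ y}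
    {π : y ⟶ c} (hi : S.IsIncl i) (hπ : IsCokernelπ i π) : IsExactSeq S i π := by
  have := hπ.epi
  have hpo : IsPushout i (0 : x ⟶ o) π 0 := IsPushout.of_exists_desc (by simp [hπ.w])
    (fun hab _ => (cancel_epi π).1 hab)
    (fun a _ ha => (hπ.exists_desc a (by simpa using ha)).imp fun _ hd => ⟨hd, ho.eq_of_src _ _⟩)
  obtain ⟨-, hπP, hpb⟩ := (S.exact_square _ _ _ _ hpo.w).1 ⟨hi, S.proj_to_zero ho _, hpo⟩
  have : Mono i := ⟨fun a b hab => hpb.hom_ext hab (ho.eq_of_tgt _ _)⟩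
  exact ⟨hi, hπP, IsKernelι.of_exists_lift hπ.w fun g hg =>
    ⟨hpb.lift g 0 (by simp [hg]), hpb.lift_fst _ _ _⟩, hπ⟩

theorem exists_isExactSeq {o : E} (ho : IsZero o) {x y : E} {i : x ⟶ y} (hi : S.IsIncl i) :
    ∃ (c : E) (π : y ⟶ c), IsExactSeq S i π := by
  obtain ⟨c, π, j, hpo⟩ := S.pushout_incl i (0 : x ⟶ o) hi
  have : Epi π := ⟨fun a b hab => hpo.hom_ext hab (ho.eq_of_src _ _)⟩
  refine ⟨c, π, S.isExactSeq_of_isCokernelπ ho hi <|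
    IsCokernelπ.of_exists_desc (by simp [hpo.w]) fun g hg => ?_⟩
  exact ⟨hpo.desc g 0 (by simp [hg]), hpo.inl_desc _ _ _⟩

theorem mem_of_isIso {A : E → Prop}
    (hAext : ∀ {u y w : E} (i : u ⟶ y) (π : y ⟶ w), IsExactSeq S i π → A u → A w → A y)
    {o : E} (ho : IsZero o) (hAo : A o) {u y : E} (f : u ⟶ y) [IsIso f] (hu : A u) : A y :=
  hAext f 0 (S.isExactSeq_of_isCokernelπ ho (S.isIncl_of_isIso f) (isCokernelπ_zero_of_epi ho f))
    hu hAo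

/-- The pullback `v` of `γ` along `t ≫ γ` is `a ⊕ b`; its projection `F` onto `a` and the
inclusion `v ↣ w` span a bicartesian square over `s` and `j ≫ s`, so `exact_square` applies. -/
theorem isIncl_comp_of_isExactSeq {a b w c d : E} {j : a ⟶ w} {γ : w ⟶ c} {t : b ⟶ w}
    {s : w ⟶ d} (hj : IsExactSeq S j γ) (ht : IsExactSeq S t s) (htγ : S.IsIncl (t ≫ γ)) :
    S.IsIncl (j ≫ s) := by
  obtain ⟨-, hγP, hjK, -⟩ := hj
  obtain ⟨-, hsP, htK, hsC⟩ := ht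
  have := hjK.mono
  have := htK.mono
  have := hsC.epi
  obtain ⟨v, g, q, hpb⟩ := S.pullback_proj γ (t ≫ γ) hγP
  have hgI : S.IsIncl g := ((S.exact_square g q γ (t ≫ γ) hpb.w).2 ⟨htγ, hγP, hpb⟩).1
  obtain ⟨F, hF⟩ := hjK.exists_lift (g - q ≫ t) (by simp [hpb.w])
  have hqt : q ≫ t = g - F ≫ j := by rw [hF, sub_sub_cancel]
  have hsq : g ≫ s = F ≫ j ≫ s := by
    rw [reassoc_of% hF, Preadditive.sub_comp, Category.assoc, htK.w, comp_zero, sub_zero]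
  have hpb' : IsPullback g F s (j ≫ s) := by
    refine IsPullback.of_exists_lift hsq (fun hg hF' => hpb.hom_ext hg ?_) fun x y hxy => ?_
    · exact (cancel_mono t).1 (by simp only [Category.assoc, hqt, Preadditive.comp_sub, hg,
        reassoc_of% hF'])
    · obtain ⟨k, hk⟩ := htK.exists_lift (x - y ≫ j) (by simp [hxy])
      have hxk : x ≫ γ = k ≫ t ≫ γ := by simp [reassoc_of% hk, hjK.w]
      refine ⟨hpb.lift x k hxk, hpb.lift_fst _ _ _, (cancel_mono j).1 ?_⟩
      rw [Category.assoc, hF, Preadditive.comp_sub, hpb.lift_fst, hpb.lift_snd_assoc, hk,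
        sub_sub_cancel]
  have hpo : IsPushout g F s (j ≫ s) := by
    refine IsPushout.of_exists_desc hsq (fun hab _ => (cancel_epi s).1 hab) fun u u' hu => ?_
    have hm : t ≫ γ = 𝟙 b ≫ t ≫ γ := (Category.id_comp _).symm
    have hmF : hpb.lift t (𝟙 b) hm ≫ F = 0 := (cancel_mono j).1 (by simp [hF])
    obtain ⟨e, he⟩ := hsC.exists_desc u (by
      rw [← hpb.lift_fst t (𝟙 b) hm, Category.assoc, hu, reassoc_of% hmF, zero_comp])
    have hn : j ≫ γ = 0 ≫ t ≫ γ := by rw [hjK.w, zero_comp]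
    have hnF : hpb.lift j 0 hn ≫ F = 𝟙 a := (cancel_mono j).1 (by simp [hF])
    refine ⟨e, he, ?_⟩
    rw [Category.assoc, he, ← hpb.lift_fst j 0 hn, Category.assoc, hu, reassoc_of% hnF]
  exact ((S.exact_square g F s (j ≫ s) hsq).1 ⟨hgI, S.proj_pullback_stable hpb' hsP, hpo⟩).1

theorem isExactSeq_of_3x3 {o : E} (ho : IsZero o) {x' y' z' x y z x'' y'' z'' : E}
    {i' : x' ⟶ y'} {π' : y' ⟶ z'} {i : x ⟶ y} {π : y ⟶ z} {i'' : x'' ⟶ y''} {π'' : y'' ⟶ z''}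
    {εx : x' ⟶ x} {εy : y' ⟶ y} {εz : z' ⟶ z} {ηx : x ⟶ x''} {ηy : y ⟶ y''} {ηz : z ⟶ z''}
    (h' : IsExactSeq S i' π') (h : IsExactSeq S i π) (hx : IsExactSeq S εx ηx)
    (hy : IsExactSeq S εy ηy) (hz : IsExactSeq S εz ηz)
    (sq₁ : i' ≫ εy = εx ≫ i) (sq₂ : π' ≫ εz = εy ≫ π)
    (sq₃ : ηx ≫ i'' = i ≫ ηy) (sq₄ : ηy ≫ π'' = π ≫ ηz) :
    IsExactSeq S i'' π'' := by
  have := h'.isCokernelπ.epi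
  have := hx.isCokernelπ.epi
  refine S.isExactSeq_of_isCokernelπ ho ?_
    (h.isCokernelπ.of_columns hy.isCokernelπ hz.isCokernelπ sq₂ sq₃ sq₄)
  -- `w` is `y / x'`: it is both the pushout of `i` along `ηx` and that of `εy` along `π'`
  obtain ⟨w, r, j, hw⟩ := S.pushout_incl i ηx h.isIncl
  obtain ⟨γ, hrγ, hjγ⟩ := hw.exists_desc π 0 (by simp [h.isCokernelπ.w])
  have hjγE : IsExactSeq S j γ := S.isExactSeq_of_isCokernelπ ho (S.incl_pushout_stable hw h.isIncl)
    (h.isCokernelπ.of_isPushout hw hrγ hjγ)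
  obtain ⟨t, ht⟩ := h'.isCokernelπ.exists_desc (εy ≫ r) (by
    rw [reassoc_of% sq₁, hw.w, reassoc_of% hx.isKernelι.w, zero_comp])
  have hpo : IsPushout εy π' r t := IsPushout.of_isCokernelπ_comp h'.isCokernelπ
    (sq₁ ▸ hx.isCokernelπ.comp_of_isPushout hw) ht.symm
  have htI : S.IsIncl t := ((S.exact_square _ _ _ _ hpo.w).1 ⟨hy.isIncl, h'.isProj, hpo⟩).1
  obtain ⟨s, hrs, hjs⟩ := hw.exists_desc ηy i'' sq₃.symm
  have hts : t ≫ s = 0 := (cancel_epi π').1 (by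
    rw [reassoc_of% ht, hrs, hy.isCokernelπ.w, comp_zero])
  have htγ : t ≫ γ = εz := (cancel_epi π').1 (by rw [reassoc_of% ht, hrγ, sq₂])
  rw [← hjs]
  exact S.isIncl_comp_of_isExactSeq hjγE
    (S.isExactSeq_of_isCokernelπ ho htI (hy.isCokernelπ.of_isPushout hpo hrs hts))
    (htγ ▸ hz.isIncl)

end ExactStructure

section Reflection

variable {E : Type u} [Category.{v} E] {P : ObjectProperty E} (Q : E → P.FullSubcategory)
  (η : ∀ x, x ⟶ (Q x).obj)
  (hη : ∀ (x : E) (Y : P.FullSubcategory) (g : x ⟶ Y.obj), ∃! d : (Q x).obj ⟶ Y.obj, η x ≫ d = g)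

noncomputable def homEquivOfExistsUnique (x : E) (Y : P.FullSubcategory) :
    (Q x ⟶ Y) ≃ (x ⟶ P.ι.obj Y) where
  toFun f := η x ≫ f.hom
  invFun g := ObjectProperty.homMk (hη x Y g).choose
  left_inv f := ObjectProperty.hom_ext (h := ((hη x Y _).choose_spec.2 f.hom rfl).symm)
  right_inv g := (hη x Y g).choose_spec.1

noncomputable def reflectorOfExistsUnique : E ⥤ P.FullSubcategory :=
  Adjunction.leftAdjointOfEquiv (homEquivOfExistsUnique Q η hη)
    fun _ _ _ _ _ => (Category.assoc _ _ _).symm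

noncomputable def adjunctionOfExistsUnique : reflectorOfExistsUnique Q η hη ⊣ P.ι :=
  Adjunction.adjunctionOfEquivLeft _ _

theorem adjunctionOfExistsUnique_unit_app (x : E) :
    (adjunctionOfExistsUnique Q η hη).unit.app x = η x :=
  Category.comp_id _

end Reflection

section RightAdjoint

variable {E : Type u} [Category.{v} E] [Preadditive E] {A : E → Prop}
  {p : E ⥤ ObjectProperty.FullSubcategory A}

theorem counit_app_comp_eq_zero (adjA : ObjectProperty.ι A ⊣ p) {x y : E} (hy : pKernel p y)
    (g : x ⟶ y) : adjA.counit.app x ≫ g = 0 := by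
  have hg := adjA.counit.naturality g
  rw [Functor.id_map] at hg
  rw [← hg, hy.eq_of_tgt ((p ⋙ ObjectProperty.ι A).map g) 0, zero_comp]

/-- `p` inverts the counit, since `ObjectProperty.ι A` is fully faithful. -/
theorem pKernel_of_isCokernelπ_counit (adjA : ObjectProperty.ι A ⊣ p) {x c : E}
    {π : x ⟶ c} (h : IsCokernelπ ((p ⋙ ObjectProperty.ι A).map (adjA.counit.app x))
      ((p ⋙ ObjectProperty.ι A).map π)) : pKernel p c :=
  have : IsIso ((p ⋙ ObjectProperty.ι A).map (adjA.counit.app x)) :=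
    inferInstanceAs (IsIso ((ObjectProperty.ι A).map (p.map _)))
  h.isZero_of_epi

end RightAdjoint

theorem sod_from_right_adjoint_general {E : Type u} [Category.{v} E] [Preadditive E]
    (S : ExactStructure E) (A : E → Prop)
    (hA₀ : ∃ z : E, IsZero z ∧ A z)
    (hAext : ∀ {u y w : E} (i : u ⟶ y) (π : y ⟶ w), IsExactSeq S i π → A u → A w → A y)
    (p : E ⥤ ObjectProperty.FullSubcategory A) (adjA : ObjectProperty.ι A ⊣ p)
    (hp_exact : ∀ {x y z : E} (i : x ⟶ y) (π : y ⟶ z), IsExactSeq S i π →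
      IsExactSeq S ((p ⋙ ObjectProperty.ι A).map i)
        ((p ⋙ ObjectProperty.ι A).map π))
    (hcounit : ∀ x : E, S.IsIncl (adjA.counit.app x)) :
    ∃ (q : E ⥤ ObjectProperty.FullSubcategory (pKernel p))
      (adjB : q ⊣ ObjectProperty.ι (pKernel p)),
      (∀ x : E, S.IsProj (adjB.unit.app x)) ∧
      (∀ x : E, IsCokernelπ (adjA.counit.app x) (adjB.unit.app x)) ∧
      (∀ x : E, IsZero x →
        IsZero ((q ⋙ ObjectProperty.ι (pKernel p)).obj x)) ∧
      (∀ {x y z : E} (i : x ⟶ y) (π : y ⟶ z), IsExactSeq S i π →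
        IsExactSeq S ((q ⋙ ObjectProperty.ι (pKernel p)).map i)
          ((q ⋙ ObjectProperty.ι (pKernel p)).map π)) ∧
      (∀ x : E, A x ↔
        IsZero ((q ⋙ ObjectProperty.ι (pKernel p)).obj x)) := by
  obtain ⟨o, ho, hAo⟩ := hA₀
  choose Q η hη using fun x => S.exists_isExactSeq ho (hcounit x)
  have hQ (x : E) : pKernel p (Q x) :=
    pKernel_of_isCokernelπ_counit adjA (hp_exact _ _ (hη x)).isCokernelπ
  have hfac (x : E) (Y : ObjectProperty.FullSubcategory (pKernel p)) (g : x ⟶ Y.obj) :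
      ∃! d : Q x ⟶ Y.obj, η x ≫ d = g :=
    (hη x).isCokernelπ.existsUnique_desc g (counit_app_comp_eq_zero adjA Y.property g)
  let q := reflectorOfExistsUnique (fun x => ⟨Q x, hQ x⟩) η hfac
  let adjB : q ⊣ _ := adjunctionOfExistsUnique (fun x => ⟨Q x, hQ x⟩) η hfac
  have hunit (x : E) : adjB.unit.app x = η x := adjunctionOfExistsUnique_unit_app _ _ _ x
  have hnat {x y : E} (f : x ⟶ y) : η x ≫ (q ⋙ ObjectProperty.ι (pKernel p)).map f = f ≫ η y := by
    rw [← hunit, ← hunit]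
    exact (adjB.unit.naturality f).symm
  refine ⟨q, adjB, fun x => hunit x ▸ (hη x).isProj, fun x => hunit x ▸ (hη x).isCokernelπ,
    fun x hx => ?_, fun i π h => ?_, fun x => ⟨fun hx => ?_, fun hx => ?_⟩⟩
  · have := (hη x).isCokernelπ.epi
    exact (hx.of_epi (η x) : IsZero (Q x))
  · exact S.isExactSeq_of_3x3 ho (hp_exact i π h) h (hη _) (hη _) (hη _)
      (adjA.counit.naturality i) (adjA.counit.naturality π) (hnat i) (hnat π)
  · have := adjA.isIso_counit_app_of_iso (Y := ⟨x, hx⟩) (Iso.refl x)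
    exact (hη x).isCokernelπ.isZero_of_epi
  · have := (hη x).isKernelι.isIso_of_eq_zero (hx.eq_of_tgt _ _)
    exact S.mem_of_isIso hAext ho hAo (adjA.counit.app x) (p.obj x).property

/-- Let `E` be an exact category and `A` an extension-closed full
subcategory whose inclusion admits an exact right adjoint `p` whose counit `ip(x) ⟶ x`
is an inclusion for every `x`.  Let `B` be the full subcategory of objects with
`p(x) ≅ 0`.  Then `q(x) := coker(ip(x) ⟶ x)` defines an exact left adjoint `q` to the
inclusion of `B`, the unit `x ⟶ jq(x)` is a projection and a cokernel of the counit for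
every `x`, and `A` coincides with the objects satisfying `q(x) ≅ 0`. -/
theorem sod_from_right_adjoint {E : Type u} [Category.{v} E] [Preadditive E]
    (S : ExactStructure E) (A : E → Prop)
    (hA₀ : ∃ z : E, IsZero z ∧ A z)
    (hAext : ∀ {u y w : E} (i : u ⟶ y) (π : y ⟶ w), IsExactSeq S i π → A u → A w → A y)
    (p : E ⥤ ObjectProperty.FullSubcategory A) (adjA : ObjectProperty.ι A ⊣ p)
    (hp_zero : ∀ x : E, IsZero x → IsZero ((p ⋙ ObjectProperty.ι A).obj x))
    (hp_exact : ∀ {x y z : E} (i : x ⟶ y) (π : y ⟶ z), IsExactSeq S i π →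
      IsExactSeq S ((p ⋙ ObjectProperty.ι A).map i)
        ((p ⋙ ObjectProperty.ι A).map π))
    (hcounit : ∀ x : E, S.IsIncl (adjA.counit.app x)) :
    ∃ (q : E ⥤ ObjectProperty.FullSubcategory (pKernel p))
      (adjB : q ⊣ ObjectProperty.ι (pKernel p)),
      (∀ x : E, S.IsProj (adjB.unit.app x)) ∧
      (∀ x : E, IsCokernelπ (adjA.counit.app x) (adjB.unit.app x)) ∧
      (∀ x : E, IsZero x →
        IsZero ((q ⋙ ObjectProperty.ι (pKernel p)).obj x)) ∧
      (∀ {x y z : E} (i : x ⟶ y) (π : y ⟶ z), IsExactSeq S i π →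
        IsExactSeq S ((q ⋙ ObjectProperty.ι (pKernel p)).map i)
          ((q ⋙ ObjectProperty.ι (pKernel p)).map π)) ∧
      (∀ x : E, A x ↔
        IsZero ((q ⋙ ObjectProperty.ι (pKernel p)).obj x)) :=
  sod_from_right_adjoint_general S A hA₀ hAext p adjA hp_exact hcounit

end ExactPaper
end

section
/- Let E be an exact category and let A be a full subcategory closed under extensions whose inclusion functor i: A → E admits an exact right adjoint p such that for each object x the counit i p(x) → x is an inclusion. Then A is left special in E: for every exact sequence x ↣ y ↠ a of E with a ∈ A, the composite p(y) → y ↠ a is a projection of E between objects of A whose kernel lies in A. (Here one uses that the counit is an isomorphism on objects of A, since i is fully faithful.) -/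
/-!
Basic definitions: exact (∞-)categories à la Barwick (1-categorical formalization).
An exact structure on an additive category consists of two wide subcategories of
"inclusions" and "projections" subject to the axioms below.
-/

open CategoryTheory CategoryTheory.Limits

universe w v u v₂ u₂

/-!
By naturality of the counit `ε`, the composite `ε_y ≫ π` equals `p(π) ≫ ε_a`. Exactness of `p`
makes `p(x) ↣ p(y) ↠ p(a)` exact, and `ε_a` is an isomorphism because `a ∈ A` and the inclusion
of `A` is fully faithful; so `ε_y ≫ π` is a projection with kernel `p(i) : p(x) ⟶ p(y)`.
-/

namespace ExactPaper

lemma ExactStructure.isProj_of_isIso {E : Type u} [Category.{v} E] [Preadditive E]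
    (S : ExactStructure E) {y z : E} (e : y ⟶ z) [IsIso e] : S.IsProj e :=
  S.proj_pullback_stable
    (IsPullback.of_horiz_isIso ⟨by simp⟩ : IsPullback e e (𝟙 z) (𝟙 z)) (S.proj_id z)

lemma IsKernelι.comp_mono {E : Type u} [Category.{v} E] [Preadditive E]
    {k x y z : E} {κ : k ⟶ x} {f : x ⟶ y} (h : IsKernelι κ f) (g : y ⟶ z) [Mono g] :
    IsKernelι κ (f ≫ g) := by
  obtain ⟨w, ⟨hκ⟩⟩ := h
  exact ⟨by rw [← Category.assoc, w, zero_comp], ⟨isKernelCompMono hκ g rfl⟩⟩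

theorem right_adjoint_left_special_general {E : Type u} [Category.{v} E] [Preadditive E]
    (S : ExactStructure E) (A : E → Prop)
    (p : E ⥤ ObjectProperty.FullSubcategory A) (adjA : ObjectProperty.ι A ⊣ p)
    (hp_exact : ∀ {x y z : E} (i : x ⟶ y) (π : y ⟶ z), IsExactSeq S i π →
      IsExactSeq S ((p ⋙ ObjectProperty.ι A).map i)
        ((p ⋙ ObjectProperty.ι A).map π)) :
    ∀ {x y a : E} (i : x ⟶ y) (π : y ⟶ a), IsExactSeq S i π → A a →
      S.IsProj (adjA.counit.app y ≫ π) ∧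
      ∃ (k : E) (κ : k ⟶ (ObjectProperty.ι A).obj (p.obj y)),
        A k ∧ IsKernelι κ (adjA.counit.app y ≫ π) := by
  intro x y a i π hex ha
  have : IsIso (adjA.counit.app a) :=
    inferInstanceAs (IsIso (adjA.counit.app ((ObjectProperty.ι A).obj ⟨a, ha⟩)))
  have hnat : adjA.counit.app y ≫ π = (p ⋙ ObjectProperty.ι A).map π ≫ adjA.counit.app a :=
    (adjA.counit.naturality π).symm
  obtain ⟨-, hproj, hker, -⟩ := hp_exact i π hex
  rw [hnat]
  exact ⟨S.proj_comp _ _ hproj (S.isProj_of_isIso _), _, _, (p.obj x).2, hker.comp_mono _⟩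

/-- Let `E` be an exact category and `A` an extension-closed full
subcategory whose inclusion admits an exact right adjoint `p` whose counit
`ip(x) ⟶ x` is an inclusion for each `x`.  Then `A` is left special in `E`: for every
exact sequence `x ↣ y ↠ a` with `a ∈ A`, the composite `p(y) ⟶ y ↠ a` is a projection
of `E` between objects of `A` whose kernel lies in `A`. -/
theorem right_adjoint_left_special {E : Type u} [Category.{v} E] [Preadditive E]
    (S : ExactStructure E) (A : E → Prop)
    (hA₀ : ∃ z : E, IsZero z ∧ A z)
    (hAext : ∀ {u y w : E} (i : u ⟶ y) (π : y ⟶ w), IsExactSeq S i π → A u → A w → A y)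
    (p : E ⥤ ObjectProperty.FullSubcategory A) (adjA : ObjectProperty.ι A ⊣ p)
    (hp_zero : ∀ x : E, IsZero x → IsZero ((p ⋙ ObjectProperty.ι A).obj x))
    (hp_exact : ∀ {x y z : E} (i : x ⟶ y) (π : y ⟶ z), IsExactSeq S i π →
      IsExactSeq S ((p ⋙ ObjectProperty.ι A).map i)
        ((p ⋙ ObjectProperty.ι A).map π))
    (hcounit : ∀ x : E, S.IsIncl (adjA.counit.app x)) :
    ∀ {x y a : E} (i : x ⟶ y) (π : y ⟶ a), IsExactSeq S i π → A a →
      S.IsProj (adjA.counit.app y ≫ π) ∧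
      ∃ (k : E) (κ : k ⟶ (ObjectProperty.ι A).obj (p.obj y)),
        A k ∧ IsKernelι κ (adjA.counit.app y ≫ π) :=
  right_adjoint_left_special_general S A p adjA hp_exact

end ExactPaper
end

section
/- Under the hypotheses of the semi-orthogonal decomposition data (exact categories E with extension-closed subcategories A, B, exact functors p: E → A, q: E → B and a natural exact sequence p(x) ↣ x ↠ q(x) whose inclusion is the counit of an adjunction with the inclusion of A and whose projection is the unit of an adjunction with the inclusion of B), for every exact category D precomposition with q induces a fully faithful functor from the category of exact functors B → D to the category of exact functors E → D, whose essential image consists precisely of the exact functors E → D sending every object of A to a zero object. -/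
/-!
Basic definitions: exact (∞-)categories à la Barwick (1-categorical formalization).
An exact structure on an additive category consists of two wide subcategories of
"inclusions" and "projections" subject to the axioms below.
-/

open CategoryTheory CategoryTheory.Limits

universe w v u v₂ u₂

namespace ExactPaper

variable {E : Type u} [Category.{v} E] [Preadditive E]
variable {D : Type u₂} [Category.{v₂} D] [Preadditive D]

/-- A functor `E ⥤ D` between exact categories is exact if it preserves zero objects and
sends exact sequences to exact sequences. -/
def IsExactFunctor (S : ExactStructure E) (T : ExactStructure D) (F : E ⥤ D) : Prop :=
  (∀ x : E, IsZero x → IsZero (F.obj x)) ∧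
  ∀ {x y z : E} (i : x ⟶ y) (π : y ⟶ z), IsExactSeq S i π →
    IsExactSeq T (F.map i) (F.map π)

/-- A functor from an extension-closed full subcategory `U ⊆ E` (with its induced exact
structure) to an exact category `D` is exact if it preserves zero objects and sends the
induced exact sequences — i.e. the sequences of `U` which are exact in `E` — to exact
sequences of `D`. -/
def IsExactFunctorOnSub (S : ExactStructure E) (U : E → Prop) (T : ExactStructure D)
    (F : ObjectProperty.FullSubcategory U ⥤ D) : Prop :=
  (∀ u : ObjectProperty.FullSubcategory U, IsZero u → IsZero (F.obj u)) ∧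
  ∀ {x y z : ObjectProperty.FullSubcategory U} (i : x ⟶ y) (π : y ⟶ z),
    IsExactSeq S ((ObjectProperty.ι U).map i) ((ObjectProperty.ι U).map π) →
    IsExactSeq T (F.map i) (F.map π)

/-!
Since the inclusion of `B` is fully faithful, its left adjoint `q` is a localization functor, so
precomposition with `q` is fully faithful. If an exact functor `G : E ⥤ D` kills `A`, then
applying `G` to the exact sequence `p x ↣ x ↠ q x` shows that `G` inverts every unit
`x ⟶ q x`, whence `G ≅ q ⋙ (ι ⋙ G)`. Conversely every `q ⋙ F` kills `A`: for `a ∈ A` the inclusion `p a ↣ a` is an isomorphism, so its cokernel `q a` is zero.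
-/

section

variable {C : Type*} [Category C] [Preadditive C] {S : ExactStructure C} {x y z : C}
  {i : x ⟶ y} {π : y ⟶ z}

lemma IsExactSeq.isIso_of_isZero (h : IsExactSeq S i π) (hx : IsZero x) : IsIso π := by
  obtain ⟨-, -, -, _, ⟨hc⟩⟩ := h
  exact CokernelCofork.IsColimit.isIso_π _ hc (hx.eq_of_src _ _)

lemma IsExactSeq.isZero_of_isIso (h : IsExactSeq S i π) [IsIso i] : IsZero z := by
  obtain ⟨-, -, -, _, ⟨hc⟩⟩ := h
  exact CokernelCofork.IsColimit.isZero_of_epi hc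

end

lemma IsExactFunctorOnSub.isExactFunctor_comp {S : ExactStructure E} {T : ExactStructure D}
    {U : E → Prop} {F : ObjectProperty.FullSubcategory U ⥤ D} (hF : IsExactFunctorOnSub S U T F)
    {q : E ⥤ ObjectProperty.FullSubcategory U} (hq : IsExactFunctor S S (q ⋙ ObjectProperty.ι U)) :
    IsExactFunctor S T (q ⋙ F) :=
  ⟨fun x hx => hF.1 _ (IsZero.of_full_of_faithful_of_isZero (ObjectProperty.ι U) _ (hq.1 x hx)),
    fun i π h => hF.2 (q.map i) (q.map π) (hq.2 i π h)⟩

lemma IsExactFunctor.isExactFunctorOnSub_ι_comp {S : ExactStructure E} {T : ExactStructure D}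
    {G : E ⥤ D} (hG : IsExactFunctor S T G) (U : E → Prop) :
    IsExactFunctorOnSub S U T (ObjectProperty.ι U ⋙ G) :=
  ⟨fun _ hu => hG.1 _ ((ObjectProperty.ι U).map_isZero hu), fun _ _ h => hG.2 _ _ h⟩

theorem verdier_quotient_universal_property_general
    (S : ExactStructure E) (T : ExactStructure D) (A B : E → Prop)
    (p : E ⥤ ObjectProperty.FullSubcategory A) (adjA : ObjectProperty.ι A ⊣ p)
    (q : E ⥤ ObjectProperty.FullSubcategory B) (adjB : q ⊣ ObjectProperty.ι B)
    (hseq : ∀ x : E, IsExactSeq S (adjA.counit.app x) (adjB.unit.app x))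
    (hq_zero : ∀ x : E, IsZero x → IsZero ((q ⋙ ObjectProperty.ι B).obj x))
    (hq_exact : ∀ {x y z : E} (i : x ⟶ y) (π : y ⟶ z), IsExactSeq S i π →
      IsExactSeq S ((q ⋙ ObjectProperty.ι B).map i)
        ((q ⋙ ObjectProperty.ι B).map π)) :
    ∃ (Φ : ObjectProperty.FullSubcategory (IsExactFunctorOnSub S B T) ⥤
        ObjectProperty.FullSubcategory (IsExactFunctor S T)),
      Nonempty (Φ ⋙ ObjectProperty.ι (IsExactFunctor S T) ≅
        ObjectProperty.ι (IsExactFunctorOnSub S B T) ⋙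
          (Functor.whiskeringLeft E (ObjectProperty.FullSubcategory B) D).obj q) ∧
      Φ.Full ∧ Φ.Faithful ∧
      (∀ G : ObjectProperty.FullSubcategory (IsExactFunctor S T),
        (∃ F, Nonempty (Φ.obj F ≅ G)) ↔ (∀ a : E, A a → IsZero (G.obj.obj a))) := by
  have := adjB.isLocalization
  have := Localization.full_whiskeringLeft q ((MorphismProperty.isomorphisms _).inverseImage q) D
  have := Localization.faithful_whiskeringLeft q ((MorphismProperty.isomorphisms _).inverseImage q) D
  have hq_kills_A (a : E) (ha : A a) : IsZero (q.obj a) := by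
    have : IsIso (adjA.counit.app a) :=
      inferInstanceAs (IsIso (adjA.counit.app ((ObjectProperty.ι A).obj ⟨a, ha⟩)))
    exact IsZero.of_full_of_faithful_of_isZero (ObjectProperty.ι B) _ (hseq a).isZero_of_isIso
  refine ⟨ObjectProperty.lift _ (ObjectProperty.ι _ ⋙ (Functor.whiskeringLeft E _ D).obj q)
      fun F => F.property.isExactFunctor_comp ⟨hq_zero, hq_exact⟩,
    ⟨ObjectProperty.liftCompιIso _ _ _⟩, inferInstance, inferInstance, fun G => ⟨?_, fun hG => ?_⟩⟩
  · rintro ⟨F, ⟨e⟩⟩ a ha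
    exact (F.property.1 _ (hq_kills_A a ha)).of_iso (((ObjectProperty.ι _).mapIso e).symm.app a)
  · have : IsIso (Functor.whiskerRight adjB.unit G.obj) :=
      (NatTrans.isIso_iff_isIso_app _).2 fun x =>
        (G.property.2 _ _ (hseq x)).isIso_of_isZero (hG _ (p.obj x).property)
    exact ⟨⟨_, G.property.isExactFunctorOnSub_ι_comp B⟩,
      ⟨(ObjectProperty.ι _).preimageIso (asIso (Functor.whiskerRight adjB.unit G.obj)).symm⟩⟩

/-- Given semi-orthogonal decomposition data on an exact category `E`
(extension-closed subcategories `A`, `B`, exact functors `p : E ⥤ A`, `q : E ⥤ B`, and a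
natural exact sequence `p(x) ↣ x ↠ q(x)` realising the counit of `incl ⊣ p` and the unit
of `q ⊣ incl`), for every exact category `D` precomposition with `q` induces a fully
faithful functor `Fun^ex(B, D) ⥤ Fun^ex(E, D)` whose essential image consists precisely
of the exact functors `E ⥤ D` sending every object of `A` to a zero object. -/
theorem verdier_quotient_universal_property
    (S : ExactStructure E) (T : ExactStructure D) (A B : E → Prop)
    (hA₀ : ∃ z : E, IsZero z ∧ A z)
    (hAext : ∀ {u y w : E} (i : u ⟶ y) (π : y ⟶ w), IsExactSeq S i π → A u → A w → A y)
    (hB₀ : ∃ z : E, IsZero z ∧ B z)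
    (hBext : ∀ {u y w : E} (i : u ⟶ y) (π : y ⟶ w), IsExactSeq S i π → B u → B w → B y)
    (p : E ⥤ ObjectProperty.FullSubcategory A) (adjA : ObjectProperty.ι A ⊣ p)
    (q : E ⥤ ObjectProperty.FullSubcategory B) (adjB : q ⊣ ObjectProperty.ι B)
    (hseq : ∀ x : E, IsExactSeq S (adjA.counit.app x) (adjB.unit.app x))
    (hp_zero : ∀ x : E, IsZero x → IsZero ((p ⋙ ObjectProperty.ι A).obj x))
    (hp_exact : ∀ {x y z : E} (i : x ⟶ y) (π : y ⟶ z), IsExactSeq S i π →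
      IsExactSeq S ((p ⋙ ObjectProperty.ι A).map i)
        ((p ⋙ ObjectProperty.ι A).map π))
    (hq_zero : ∀ x : E, IsZero x → IsZero ((q ⋙ ObjectProperty.ι B).obj x))
    (hq_exact : ∀ {x y z : E} (i : x ⟶ y) (π : y ⟶ z), IsExactSeq S i π →
      IsExactSeq S ((q ⋙ ObjectProperty.ι B).map i)
        ((q ⋙ ObjectProperty.ι B).map π)) :
    ∃ (Φ : ObjectProperty.FullSubcategory (IsExactFunctorOnSub S B T) ⥤
        ObjectProperty.FullSubcategory (IsExactFunctor S T)),
      Nonempty (Φ ⋙ ObjectProperty.ι (IsExactFunctor S T) ≅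
        ObjectProperty.ι (IsExactFunctorOnSub S B T) ⋙
          (Functor.whiskeringLeft E (ObjectProperty.FullSubcategory B) D).obj q) ∧
      Φ.Full ∧ Φ.Faithful ∧
      (∀ G : ObjectProperty.FullSubcategory (IsExactFunctor S T),
        (∃ F, Nonempty (Φ.obj F ≅ G)) ↔ (∀ a : E, A a → IsZero (G.obj.obj a))) :=
  verdier_quotient_universal_property_general S T A B p adjA q adjB hseq hq_zero hq_exact

end ExactPaper
end
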